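/- arXiv:2201.07637 — 2 statements merged into one kernel-verified Lean document; each statement's English description precedes it below -/
import Mathlib

section
/- Every monotone caterpillar graph is good; that is, if G is a connected ordered graph on m vertices that is a join of one-sided ordered stars, then r_<(G, K_n) = (m−1)(n−1) + 1 for every positive integer n. -/
/-- `G` (an ordered graph on `[m]`, modeled on `Fin m`) is an ordered subgraph of `H`
(on `Fin N`): there is a strictly increasing map preserving edges. -/
def OrderedSubgraph {m N : ℕ} (G : SimpleGraph (Fin m)) (H : SimpleGraph (Fin N)) : Prop :=
  ∃ φ : Fin m → Fin N, StrictMono φ ∧ ∀ i j : Fin m, G.Adj i j → H.Adj (φ i) (φ j)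

/-- The ordered Ramsey number `r_<(G, H)`: the least `N` such that every red-blue coloring
of the edges of the complete ordered graph on `N` vertices (given by its red graph `R`)
contains a red ordered copy of `G` or a blue ordered copy of `H`. -/
noncomputable def orderedRamsey {m k : ℕ} (G : SimpleGraph (Fin m)) (H : SimpleGraph (Fin k)) : ℕ :=
  sInf {N : ℕ | ∀ R : SimpleGraph (Fin N), OrderedSubgraph G R ∨ OrderedSubgraph H Rᶜ}

/-- The nested matching `NM_n`: the ordered graph on `2n` vertices with edges
`{i, 2n - i + 1}` (1-indexed), i.e. `i + j = 2n - 1` in 0-indexed form. -/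
def nestedMatching (n : ℕ) : SimpleGraph (Fin (2 * n)) :=
  SimpleGraph.fromRel (fun i j => (i : ℕ) + (j : ℕ) = 2 * n - 1)

/-- The ordered star `S_{l,r}` on `l + r - 1` vertices: the `l`-th vertex (1-indexed)
is adjacent to all other vertices. -/
def orderedStar (l r : ℕ) : SimpleGraph (Fin (l + r - 1)) :=
  SimpleGraph.fromRel (fun i _ => (i : ℕ) = l - 1)

/-- The join `G + H` of ordered graphs, identifying the rightmost vertex of `G`
with the leftmost vertex of `H`. -/
def orderedJoin {m k : ℕ} (G : SimpleGraph (Fin m)) (H : SimpleGraph (Fin k)) :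
    SimpleGraph (Fin (m + k - 1)) :=
  SimpleGraph.fromRel (fun i j =>
    (∃ a b : Fin m, G.Adj a b ∧ (i : ℕ) = (a : ℕ) ∧ (j : ℕ) = (b : ℕ)) ∨
    (∃ a b : Fin k, H.Adj a b ∧ (i : ℕ) = (a : ℕ) + (m - 1) ∧ (j : ℕ) = (b : ℕ) + (m - 1)))

/-- A connected ordered graph on `m` vertices is `n`-good if
`r_<(G, K_n) = (m-1)(n-1) + 1`. -/
def IsNGood {m : ℕ} (n : ℕ) (G : SimpleGraph (Fin m)) : Prop :=
  G.Connected ∧ orderedRamsey G (⊤ : SimpleGraph (Fin n)) = (m - 1) * (n - 1) + 1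

/-- Monotone caterpillar graphs: joins `S_{l₁,r₁} + ⋯ + S_{l_k,r_k}` of one-sided
ordered stars. -/
inductive IsMonotoneCaterpillar : ∀ {m : ℕ}, SimpleGraph (Fin m) → Prop
  | star {l r : ℕ} (hl : 1 ≤ l) (hr : 1 ≤ r) (h : l = 1 ∨ r = 1) :
      IsMonotoneCaterpillar (orderedStar l r)
  | join {m l r : ℕ} {G : SimpleGraph (Fin m)} (hl : 1 ≤ l) (hr : 1 ≤ r) (h : l = 1 ∨ r = 1)
      (hG : IsMonotoneCaterpillar G) : IsMonotoneCaterpillar (orderedJoin G (orderedStar l r))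

/-- A route in the `N × N` grid: a sequence of positions going only right or down. -/
def IsRoute {N : ℕ} (s : List (Fin N × Fin N)) : Prop :=
  s.Chain' (fun p q =>
    ((q.1 : ℕ) = (p.1 : ℕ) + 1 ∧ q.2 = p.2) ∨ (q.1 = p.1 ∧ (q.2 : ℕ) = (p.2 : ℕ) + 1))


/-! Write `AvoidersColorable G c` when every finite ordered graph without an ordered copy of `G`
is properly `c`-colourable. A graph avoiding the one-sided star `S_{1,r}` has fewer than `r - 1`
larger neighbours at every vertex, so greedy colouring from the right uses `r - 1` colours;
symmetrically for `S_{l,1}`. If `G` forces `a` colours and `H` forces `b`, then `G + H` forces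
`a + b`: the set `W` of first vertices of copies of `H` spans no copy of `G` (it would extend to a
copy of `G + H`), and its complement spans no copy of `H`. Hence a monotone caterpillar on `m`
vertices forces `m - 1` colours, and a red graph on `(m - 1)(n - 1) + 1` vertices without a red
`G` has a colour class of size `n`, i.e. a blue `K_n`. For the lower bound, colour red exactly the
edges inside consecutive blocks of `m - 1` vertices. -/

open SimpleGraph Finset

section OrderedCopy

variable {α : Type*} [Preorder α]

def IsOrderedCopy {m : ℕ} (G : SimpleGraph (Fin m)) (R : SimpleGraph α) (φ : Fin m → α) : Prop :=
  StrictMono φ ∧ ∀ i j, G.Adj i j → R.Adj (φ i) (φ j)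

def HasOrderedCopy {m : ℕ} (G : SimpleGraph (Fin m)) (R : SimpleGraph α) : Prop :=
  ∃ φ, IsOrderedCopy G R φ

def copyStarts {k : ℕ} (H : SimpleGraph (Fin k)) (R : SimpleGraph α) : Set α :=
  {w | ∃ (hk : 0 < k) (χ : Fin k → α), IsOrderedCopy H R χ ∧ χ ⟨0, hk⟩ = w}

theorem IsOrderedCopy.hasOrderedCopy_orderedJoin {m k : ℕ} {G : SimpleGraph (Fin m)}
    {H : SimpleGraph (Fin k)} {R : SimpleGraph α} {ψ : Fin m → α} {χ : Fin k → α}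
    (hψ : IsOrderedCopy G R ψ) (hχ : IsOrderedCopy H R χ) (hm : 0 < m) (hk : 0 < k)
    (hglue : ψ ⟨m - 1, by omega⟩ = χ ⟨0, hk⟩) : HasOrderedCopy (orderedJoin G H) R := by
  let φ : Fin (m + k - 1) → α := fun i =>
    if h : (i : ℕ) < m then ψ ⟨i, h⟩ else χ ⟨i + 1 - m, by omega⟩
  have hφ_left : ∀ (a : Fin m) (i : Fin (m + k - 1)), (i : ℕ) = a → φ i = ψ a := by
    intro a i hi
    simp only [φ, hi, a.isLt, dif_pos]
  have hφ_right : ∀ (b : Fin k) (i : Fin (m + k - 1)), (i : ℕ) = b + (m - 1) → φ i = χ b := by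
    intro b i hi
    by_cases hb : (b : ℕ) = 0
    · rw [hφ_left ⟨m - 1, by omega⟩ i (by simp [hi, hb]), hglue]
      exact congrArg χ (Fin.ext hb.symm)
    · simp only [φ, show ¬ (i : ℕ) < m by omega, dif_neg, not_false_eq_true]
      exact congrArg χ (Fin.ext (by simp only; omega))
  refine ⟨φ, fun i j hij => ?_, fun i j hij => ?_⟩
  · have hij : (i : ℕ) < j := hij
    by_cases hj : (j : ℕ) < m
    · rw [hφ_left ⟨i, by omega⟩ i rfl, hφ_left ⟨j, hj⟩ j rfl]
      exact hψ.1 (Fin.mk_lt_mk.mpr hij)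
    rw [hφ_right ⟨j + 1 - m, by omega⟩ j (by simp only; omega)]
    by_cases hi : (i : ℕ) < m
    · rw [hφ_left ⟨i, hi⟩ i rfl]
      calc ψ ⟨i, hi⟩ ≤ ψ ⟨m - 1, by omega⟩ := hψ.1.monotone (Fin.mk_le_mk.mpr (by omega))
        _ = χ ⟨0, hk⟩ := hglue
        _ < χ ⟨j + 1 - m, _⟩ := hχ.1 (Fin.mk_lt_mk.mpr (by omega))
    · rw [hφ_right ⟨i + 1 - m, by omega⟩ i (by simp only; omega)]
      exact hχ.1 (Fin.mk_lt_mk.mpr (by omega))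
  · rw [orderedJoin, fromRel_adj] at hij
    obtain ⟨-, (⟨a, b, hab, hi, hj⟩ | ⟨a, b, hab, hi, hj⟩) |
      (⟨a, b, hab, hj, hi⟩ | ⟨a, b, hab, hj, hi⟩)⟩ := hij
    · rw [hφ_left a i hi, hφ_left b j hj]; exact hψ.2 a b hab
    · rw [hφ_right a i hi, hφ_right b j hj]; exact hχ.2 a b hab
    · rw [hφ_left a j hj, hφ_left b i hi]; exact (hψ.2 a b hab).symm
    · rw [hφ_right a j hj, hφ_right b i hi]; exact (hχ.2 a b hab).symm

theorem not_hasOrderedCopy_induce_compl_copyStarts {k : ℕ} {H : SimpleGraph (Fin k)}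
    (hk : 0 < k) (R : SimpleGraph α) : ¬HasOrderedCopy H (R.induce (copyStarts H R)ᶜ) :=
  fun ⟨χ, hχ, hχadj⟩ =>
    (χ ⟨0, hk⟩).2 ⟨hk, Subtype.val ∘ χ, ⟨Subtype.strictMono_coe _ |>.comp hχ, hχadj⟩, rfl⟩

theorem not_hasOrderedCopy_induce_copyStarts {m k : ℕ} {G : SimpleGraph (Fin m)}
    {H : SimpleGraph (Fin k)} {R : SimpleGraph α} (hm : 0 < m)
    (hR : ¬HasOrderedCopy (orderedJoin G H) R) :
    ¬HasOrderedCopy G (R.induce (copyStarts H R)) := by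
  rintro ⟨ψ, hψ, hψadj⟩
  obtain ⟨hk, χ, hχ, hglue⟩ := (ψ ⟨m - 1, by omega⟩).2
  exact hR (IsOrderedCopy.hasOrderedCopy_orderedJoin
    ⟨Subtype.strictMono_coe _ |>.comp hψ, hψadj⟩ hχ hm hk hglue.symm)

end OrderedCopy

section Coloring

variable {α : Type*} {R : SimpleGraph α}

theorem SimpleGraph.Colorable.of_induce_of_induce_compl (s : Set α) {a b : ℕ}
    (h₁ : (R.induce s).Colorable a) (h₂ : (R.induce sᶜ).Colorable b) : R.Colorable (a + b) := by
  classical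
  obtain ⟨C₁, hC₁⟩ := (colorable_iff_exists_bdd_nat_coloring a).mp h₁
  obtain ⟨C₂, hC₂⟩ := (colorable_iff_exists_bdd_nat_coloring b).mp h₂
  let C : α → ℕ := fun v => if hv : v ∈ s then C₁ ⟨v, hv⟩ else a + C₂ ⟨v, hv⟩
  have hC : ∀ {u v}, R.Adj u v → C u ≠ C v := by
    intro u v huv
    by_cases hu : u ∈ s <;> by_cases hv : v ∈ s <;> simp only [C, hu, hv, dif_pos, dif_neg,
      not_false_eq_true]
    · exact C₁.valid (show (R.induce s).Adj ⟨u, hu⟩ ⟨v, hv⟩ from huv)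
    · have := hC₁ ⟨u, hu⟩; omega
    · have := hC₁ ⟨v, hv⟩; omega
    · exact fun h => C₂.valid (show (R.induce sᶜ).Adj ⟨u, hu⟩ ⟨v, hv⟩ from huv) (by omega)
  refine (colorable_iff_exists_bdd_nat_coloring _).mpr ⟨Coloring.mk C hC, fun v => ?_⟩
  by_cases hv : v ∈ s
  · have := hC₁ ⟨v, hv⟩; show C v < a + b; simp only [C, dif_pos hv]; omega
  · have := hC₂ ⟨v, hv⟩; show C v < a + b; simp only [C, dif_neg hv]; omega

theorem SimpleGraph.colorable_of_forall_card_lt [LinearOrder α] [Finite α] (k : ℕ)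
    (h : ∀ v (t : Finset α), (∀ u ∈ t, u < v ∧ R.Adj v u) → #t < k) : R.Colorable k := by
  classical
  have := Fintype.ofFinite α
  suffices ∀ s : Finset α, ∃ C : α → ℕ,
      (∀ v ∈ s, C v < k) ∧ ∀ u ∈ s, ∀ v ∈ s, R.Adj u v → C u ≠ C v by
    obtain ⟨C, hCk, hC⟩ := this univ
    exact (colorable_iff_exists_bdd_nat_coloring k).mpr
      ⟨Coloring.mk C fun huv => hC _ (mem_univ _) _ (mem_univ _) huv,
        fun v => hCk v (mem_univ v)⟩
  intro s
  induction s using Finset.induction_on_max with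
  | empty => exact ⟨fun _ => 0, by simp, by simp⟩
  | insert a s hlt ih =>
    obtain ⟨C, hCk, hC⟩ := ih
    have hfew : #((s.filter (R.Adj a)).image C) < #(range k) := by
      rw [card_range]
      refine card_image_le.trans_lt (h a _ fun u hu => ?_)
      rw [mem_filter] at hu
      exact ⟨hlt u hu.1, hu.2⟩
    obtain ⟨x, hxk, hx⟩ := exists_mem_notMem_of_card_lt_card hfew
    have hfresh : ∀ u ∈ s, R.Adj a u → C u ≠ x :=
      fun u hu hau hux => hx (mem_image.mpr ⟨u, mem_filter.mpr ⟨hu, hau⟩, hux⟩)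
    have ha : a ∉ s := fun has => (hlt a has).false
    refine ⟨Function.update C a x, fun v hv => ?_, fun u hu v hv huv => ?_⟩
    · rcases mem_insert.mp hv with rfl | hv
      · simpa using hxk
      · rw [Function.update_of_ne (ne_of_mem_of_not_mem hv ha)]; exact hCk v hv
    rcases mem_insert.mp hu with rfl | hu' <;> rcases mem_insert.mp hv with rfl | hv'
    · exact (R.irrefl huv).elim
    · rw [Function.update_self, Function.update_of_ne (ne_of_mem_of_not_mem hv' ha)]
      exact (hfresh v hv' huv).symm
    · rw [Function.update_self, Function.update_of_ne (ne_of_mem_of_not_mem hu' ha)]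
      exact hfresh u hu' huv.symm
    · rw [Function.update_of_ne (ne_of_mem_of_not_mem hu' ha),
        Function.update_of_ne (ne_of_mem_of_not_mem hv' ha)]
      exact hC u hu' v hv' huv

end Coloring

section Stars

variable {α : Type*} [LinearOrder α] {R : SimpleGraph α}

theorem hasOrderedCopy_orderedStar_of_finset {l r : ℕ} (S : Finset α) (hS : #S = l + r - 1)
    (hl : l - 1 < l + r - 1)
    (hadj : ∀ u ∈ S, u ≠ S.orderEmbOfFin hS ⟨l - 1, hl⟩ →
      R.Adj (S.orderEmbOfFin hS ⟨l - 1, hl⟩) u) :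
    HasOrderedCopy (orderedStar l r) R := by
  have hcenter : ∀ i j : Fin (l + r - 1), i ≠ j → (i : ℕ) = l - 1 →
      R.Adj (S.orderEmbOfFin hS i) (S.orderEmbOfFin hS j) := by
    intro i j hne hi
    obtain rfl : i = ⟨l - 1, hl⟩ := Fin.ext hi
    exact hadj _ (S.orderEmbOfFin_mem hS j) ((S.orderEmbOfFin hS).injective.ne hne.symm)
  refine ⟨S.orderEmbOfFin hS, (S.orderEmbOfFin hS).strictMono, fun i j hij => ?_⟩
  rw [orderedStar, fromRel_adj] at hij
  rcases hij with ⟨hne, hi | hj⟩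
  · exact hcenter i j hne hi
  · exact (hcenter j i hne.symm hj).symm

theorem hasOrderedCopy_orderedStar_one_of_le_card {r : ℕ} (hr : 1 ≤ r) {v : α} {t : Finset α}
    (ht : ∀ u ∈ t, v < u ∧ R.Adj v u) (hcard : r - 1 ≤ #t) :
    HasOrderedCopy (orderedStar 1 r) R := by
  obtain ⟨t', ht't, ht'⟩ := exists_subset_card_eq hcard
  have hv : v ∉ t' := fun hv => (ht v (ht't hv)).1.false
  have hS : #(insert v t') = 1 + r - 1 := by rw [card_insert_of_notMem hv]; omega
  have hmin : (insert v t').orderEmbOfFin hS ⟨1 - 1, by omega⟩ = v := by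
    rw [show (⟨1 - 1, _⟩ : Fin (1 + r - 1)) = ⟨0, by omega⟩ from rfl, orderEmbOfFin_zero]
    refine le_antisymm (min'_le _ _ (mem_insert_self v t')) (le_min' _ _ _ fun u hu => ?_)
    rcases mem_insert.mp hu with rfl | hu
    exacts [le_rfl, (ht u (ht't hu)).1.le]
  refine hasOrderedCopy_orderedStar_of_finset _ hS (by omega) fun u hu hne => ?_
  rw [hmin] at hne ⊢
  exact (ht u (ht't ((mem_insert.mp hu).resolve_left hne))).2

theorem hasOrderedCopy_orderedStar_of_le_card_one {l : ℕ} (hl : 1 ≤ l) {v : α} {t : Finset α}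
    (ht : ∀ u ∈ t, u < v ∧ R.Adj v u) (hcard : l - 1 ≤ #t) :
    HasOrderedCopy (orderedStar l 1) R := by
  obtain ⟨t', ht't, ht'⟩ := exists_subset_card_eq hcard
  have hv : v ∉ t' := fun hv => (ht v (ht't hv)).1.false
  have hS : #(insert v t') = l + 1 - 1 := by rw [card_insert_of_notMem hv]; omega
  have hmax : (insert v t').orderEmbOfFin hS ⟨l - 1, by omega⟩ = v := by
    rw [show (⟨l - 1, _⟩ : Fin (l + 1 - 1)) = ⟨l + 1 - 1 - 1, by omega⟩ from Fin.ext (by simp),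
      orderEmbOfFin_last hS (by omega)]
    refine le_antisymm (max'_le _ _ _ fun u hu => ?_) (le_max' _ _ (mem_insert_self v t'))
    rcases mem_insert.mp hu with rfl | hu
    exacts [le_rfl, (ht u (ht't hu)).1.le]
  refine hasOrderedCopy_orderedStar_of_finset _ hS (by omega) fun u hu hne => ?_
  rw [hmax] at hne ⊢
  exact (ht u (ht't ((mem_insert.mp hu).resolve_left hne))).2

end Stars

def AvoidersColorable {m : ℕ} (G : SimpleGraph (Fin m)) (c : ℕ) : Prop :=
  ∀ (α : Type) [LinearOrder α] [Finite α] (R : SimpleGraph α),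
    ¬HasOrderedCopy G R → R.Colorable c

theorem avoidersColorable_orderedStar {l r : ℕ} (hl : 1 ≤ l) (hr : 1 ≤ r) (h : l = 1 ∨ r = 1) :
    AvoidersColorable (orderedStar l r) (l + r - 1 - 1) := by
  intro α _ _ R hR
  rcases h with rfl | rfl
  · refine colorable_of_forall_card_lt (α := αᵒᵈ) (R := R) _ fun v t ht => ?_
    by_contra! hcard
    exact hR (hasOrderedCopy_orderedStar_one_of_le_card hr ht
      ((by omega : r - 1 ≤ 1 + r - 1 - 1).trans hcard))
  · refine colorable_of_forall_card_lt _ fun v t ht => ?_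
    by_contra! hcard
    exact hR (hasOrderedCopy_orderedStar_of_le_card_one hl ht (by omega))

theorem AvoidersColorable.join {m k a b : ℕ} {G : SimpleGraph (Fin m)} {H : SimpleGraph (Fin k)}
    (hG : AvoidersColorable G a) (hH : AvoidersColorable H b) (hm : 0 < m) (hk : 0 < k) :
    AvoidersColorable (orderedJoin G H) (a + b) := fun _ _ _ R hR =>
  (hG _ _ (not_hasOrderedCopy_induce_copyStarts hm hR)).of_induce_of_induce_compl _
    (hH _ _ (not_hasOrderedCopy_induce_compl_copyStarts hk R))

theorem IsMonotoneCaterpillar.pos {m : ℕ} {G : SimpleGraph (Fin m)}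
    (h : IsMonotoneCaterpillar G) : 0 < m := by
  induction h <;> omega

theorem IsMonotoneCaterpillar.avoidersColorable {m : ℕ} {G : SimpleGraph (Fin m)}
    (h : IsMonotoneCaterpillar G) : AvoidersColorable G (m - 1) := by
  induction h with
  | star hl hr h => exact avoidersColorable_orderedStar hl hr h
  | join hl hr h hG ih =>
    have hm := hG.pos
    convert ih.join (avoidersColorable_orderedStar hl hr h) hm (by omega) using 1
    omega

theorem hasOrderedCopy_top_of_isClique {α : Type*} [LinearOrder α] {R : SimpleGraph α} {n : ℕ}
    {s : Finset α} (hs : R.IsClique (s : Set α)) (hn : n ≤ #s) :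
    HasOrderedCopy (⊤ : SimpleGraph (Fin n)) R := by
  refine ⟨fun i => s.orderEmbOfFin rfl (Fin.castLE hn i),
    (s.orderEmbOfFin rfl).strictMono.comp (Fin.strictMono_castLE hn), fun i j hij => ?_⟩
  exact hs (s.orderEmbOfFin_mem rfl _) (s.orderEmbOfFin_mem rfl _)
    ((s.orderEmbOfFin rfl).injective.ne ((Fin.castLE_injective hn).ne hij))

theorem AvoidersColorable.orderedSubgraph_or {m c : ℕ} {G : SimpleGraph (Fin m)}
    (hG : AvoidersColorable G c) (n : ℕ) (R : SimpleGraph (Fin (c * (n - 1) + 1))) :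
    OrderedSubgraph G R ∨ OrderedSubgraph (⊤ : SimpleGraph (Fin n)) Rᶜ := by
  classical
  by_cases hcopy : HasOrderedCopy G R
  · exact Or.inl hcopy
  obtain ⟨C⟩ := hG _ R hcopy
  obtain ⟨y, hy⟩ := Fintype.exists_lt_card_fiber_of_mul_lt_card C (n := n - 1) (by simp)
  refine Or.inr (hasOrderedCopy_top_of_isClique ?_ (by omega : n ≤ #{x | C x = y}))
  rw [isClique_compl]
  convert C.isIndepSet_colorClass y
  ext
  simp [Coloring.colorClass]

def blockGraph (N b : ℕ) : SimpleGraph (Fin N) :=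
  (⊤ : SimpleGraph ℕ).comap fun i => (i : ℕ) / b

theorem not_orderedSubgraph_compl_blockGraph {m N b : ℕ} {G : SimpleGraph (Fin m)}
    (hG : G.Connected) (hb : 0 < b) (hbm : b < m) : ¬OrderedSubgraph G (blockGraph N b)ᶜ := by
  rintro ⟨φ, hφ, hφadj⟩
  have hblock : ∀ a a', Relation.ReflTransGen G.Adj a a' → (φ a : ℕ) / b = (φ a' : ℕ) / b := by
    intro a a' h
    induction h with
    | refl => rfl
    | tail _ hadj ih =>
      have := hφadj _ _ hadj
      simp only [blockGraph, compl_adj, comap_adj, top_adj, not_not] at this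
      exact ih.trans this.2
  have hinj : Function.Injective fun a : Fin m => (⟨(φ a : ℕ) % b, Nat.mod_lt _ hb⟩ : Fin b) := by
    intro a a' h
    refine hφ.injective (Fin.ext ?_)
    rw [← Nat.div_add_mod (φ a) b, ← Nat.div_add_mod (φ a') b,
      hblock a a' ((reachable_iff_reflTransGen a a').mp (hG.preconnected a a')), Fin.mk.inj h]
  have := Fintype.card_le_of_injective _ hinj
  simp only [Fintype.card_fin] at this
  omega

theorem not_orderedSubgraph_top_blockGraph {n N b : ℕ} (hn : 1 ≤ n) (hN : N ≤ b * (n - 1)) :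
    ¬OrderedSubgraph (⊤ : SimpleGraph (Fin n)) (blockGraph N b) := by
  rintro ⟨φ, -, hφadj⟩
  have hinj : Function.Injective fun i : Fin n =>
      (⟨(φ i : ℕ) / b, Nat.div_lt_of_lt_mul ((φ i).isLt.trans_le hN)⟩ : Fin (n - 1)) := by
    intro i j h
    by_contra hne
    exact hφadj i j hne (Fin.mk.inj h)
  have := Fintype.card_le_of_injective _ hinj
  simp only [Fintype.card_fin] at this
  omega

theorem exists_not_orderedSubgraph_of_le {m n N : ℕ} {G : SimpleGraph (Fin m)}
    (hG : G.Connected) (hn : 1 ≤ n) (hN : N ≤ (m - 1) * (n - 1)) :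
    ∃ R : SimpleGraph (Fin N),
      ¬OrderedSubgraph G R ∧ ¬OrderedSubgraph (⊤ : SimpleGraph (Fin n)) Rᶜ := by
  have hm : 0 < m := Fin.pos_iff_nonempty.mpr hG.nonempty
  rcases Nat.eq_zero_or_pos (m - 1) with hb | hb
  · obtain rfl : N = 0 := by simpa [hb] using hN
    exact ⟨⊥, fun ⟨φ, _⟩ => (φ ⟨0, hm⟩).elim0, fun ⟨φ, _⟩ => (φ ⟨0, hn⟩).elim0⟩
  refine ⟨(blockGraph N (m - 1))ᶜ, not_orderedSubgraph_compl_blockGraph hG hb (by omega), ?_⟩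
  rw [compl_compl]
  exact not_orderedSubgraph_top_blockGraph hn hN

/-- Every monotone caterpillar graph is good: if `G` is a connected ordered
graph on `m` vertices that is a join of one-sided ordered stars, then
`r_<(G, K_n) = (m - 1)(n - 1) + 1` for every positive integer `n`. -/
theorem stmt_10 (m : ℕ) (G : SimpleGraph (Fin m)) (hG : G.Connected)
    (hcat : IsMonotoneCaterpillar G) (n : ℕ) (hn : 1 ≤ n) :
    orderedRamsey G (⊤ : SimpleGraph (Fin n)) = (m - 1) * (n - 1) + 1 := by
  have hupper := hcat.avoidersColorable.orderedSubgraph_or n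
  refine le_antisymm (Nat.sInf_le hupper) (le_csInf ⟨_, hupper⟩ fun N hN => ?_)
  by_contra! hlt
  obtain ⟨R, hred, hblue⟩ := exists_not_orderedSubgraph_of_le hG hn (Nat.lt_succ_iff.mp hlt)
  exact (hN R).elim hred hblue
end

section
/- A connected ordered graph G is a monotone caterpillar graph if and only if G contains none of the following four ordered graphs as an ordered subgraph: A, the ordered graph on [4] with edges {1,4} and {2,3}; B, the ordered graph on [4] with edges {1,3} and {2,4}; C, the ordered graph on [4] with edges {1,2}, {1,4} and {3,4}; and D, the complete ordered graph K_3 on [3]. -/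
/-- The ordered graph `A` on `[4]` with edges `{1,4}` and `{2,3}`. -/
def graphA : SimpleGraph (Fin 4) :=
  SimpleGraph.fromRel (fun i j => (i = 0 ∧ j = 3) ∨ (i = 1 ∧ j = 2))

/-- The ordered graph `B` on `[4]` with edges `{1,3}` and `{2,4}`. -/
def graphB : SimpleGraph (Fin 4) :=
  SimpleGraph.fromRel (fun i j => (i = 0 ∧ j = 2) ∨ (i = 1 ∧ j = 3))

/-- The ordered graph `C` on `[4]` with edges `{1,2}`, `{1,4}` and `{3,4}`. -/
def graphC : SimpleGraph (Fin 4) :=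
  SimpleGraph.fromRel (fun i j => (i = 0 ∧ j = 1) ∨ (i = 0 ∧ j = 3) ∨ (i = 2 ∧ j = 3))

/-!
In a join `G + S` with a star `S`, the vertices of `G` precede those of `S` apart from the one they
share, so a short case check shows that a copy of `A`, `B`, `C` or `K₃` in `G + S` lies inside `G`
or inside `S`; and a star contains none of them, since all its edges meet at the centre.

Conversely, let `v` be the last vertex of `G` and `c` its leftmost neighbour. Avoiding `A` and `B`
forces every edge ending to the right of `c` to start at `c` or to end at `v`. Every vertex has a
neighbour, so with `C` and `K₃` excluded there are two cases: either the vertices strictly between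
`c` and `v` are all adjacent to `v` and none is adjacent to `c`, or all vertices after `c` are
adjacent to `c` and `c` is the only neighbour of `v`. In both cases `G` is the join of its
restriction to `[0, c]` and a one-sided star. That restriction is again connected and avoids the
four patterns, so it is a monotone caterpillar by induction.
-/

theorem orderedSubgraph_graphA_iff {m : ℕ} {G : SimpleGraph (Fin m)} :
    OrderedSubgraph graphA G ↔
      ∃ a b c d, a < b ∧ b < c ∧ c < d ∧ G.Adj a d ∧ G.Adj b c := by
  constructor
  · rintro ⟨φ, hφ, hadj⟩
    exact ⟨φ 0, φ 1, φ 2, φ 3, hφ (by decide), hφ (by decide), hφ (by decide),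
      hadj 0 3 (by simp [graphA]), hadj 1 2 (by simp [graphA])⟩
  · rintro ⟨a, b, c, d, hab, hbc, hcd, had, hbc'⟩
    refine ⟨![a, b, c, d], ?_, ?_⟩
    · exact (((Subsingleton.strictMono (α := Fin 1) _).vecCons hcd).vecCons hbc).vecCons hab
    · intro i j h
      fin_cases i <;> fin_cases j <;> simp_all [graphA, SimpleGraph.adj_comm]

theorem orderedSubgraph_graphB_iff {m : ℕ} {G : SimpleGraph (Fin m)} :
    OrderedSubgraph graphB G ↔
      ∃ a b c d, a < b ∧ b < c ∧ c < d ∧ G.Adj a c ∧ G.Adj b d := by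
  constructor
  · rintro ⟨φ, hφ, hadj⟩
    exact ⟨φ 0, φ 1, φ 2, φ 3, hφ (by decide), hφ (by decide), hφ (by decide),
      hadj 0 2 (by simp [graphB]), hadj 1 3 (by simp [graphB])⟩
  · rintro ⟨a, b, c, d, hab, hbc, hcd, hac, hbd⟩
    refine ⟨![a, b, c, d], ?_, ?_⟩
    · exact (((Subsingleton.strictMono (α := Fin 1) _).vecCons hcd).vecCons hbc).vecCons hab
    · intro i j h
      fin_cases i <;> fin_cases j <;> simp_all [graphB, SimpleGraph.adj_comm]

theorem orderedSubgraph_graphC_iff {m : ℕ} {G : SimpleGraph (Fin m)} :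
    OrderedSubgraph graphC G ↔
      ∃ a b c d, a < b ∧ b < c ∧ c < d ∧ G.Adj a b ∧ G.Adj a d ∧ G.Adj c d := by
  constructor
  · rintro ⟨φ, hφ, hadj⟩
    exact ⟨φ 0, φ 1, φ 2, φ 3, hφ (by decide), hφ (by decide), hφ (by decide),
      hadj 0 1 (by simp [graphC]), hadj 0 3 (by simp [graphC]), hadj 2 3 (by simp [graphC])⟩
  · rintro ⟨a, b, c, d, hab, hbc, hcd, hab', had, hcd'⟩
    refine ⟨![a, b, c, d], ?_, ?_⟩
    · exact (((Subsingleton.strictMono (α := Fin 1) _).vecCons hcd).vecCons hbc).vecCons hab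
    · intro i j h
      fin_cases i <;> fin_cases j <;> simp_all [graphC, SimpleGraph.adj_comm]

theorem orderedSubgraph_triangle_iff {m : ℕ} {G : SimpleGraph (Fin m)} :
    OrderedSubgraph (⊤ : SimpleGraph (Fin 3)) G ↔
      ∃ a b c, a < b ∧ b < c ∧ G.Adj a b ∧ G.Adj a c ∧ G.Adj b c := by
  constructor
  · rintro ⟨φ, hφ, hadj⟩
    exact ⟨φ 0, φ 1, φ 2, hφ (by decide), hφ (by decide),
      hadj 0 1 (by simp), hadj 0 2 (by simp), hadj 1 2 (by simp)⟩
  · rintro ⟨a, b, c, hab, hbc, hab', hac, hbc'⟩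
    refine ⟨![a, b, c], ?_, ?_⟩
    · exact ((Subsingleton.strictMono (α := Fin 1) _).vecCons hbc).vecCons hab
    · intro i j h
      fin_cases i <;> fin_cases j <;> simp_all [SimpleGraph.adj_comm]

theorem orderedStar_adj {l r : ℕ} {i j : Fin (l + r - 1)} :
    (orderedStar l r).Adj i j ↔ i ≠ j ∧ ((i : ℕ) = l - 1 ∨ (j : ℕ) = l - 1) := by
  simp [orderedStar]

theorem orderedJoin_orderedStar_adj {p l r : ℕ} {G : SimpleGraph (Fin p)}
    {i j : Fin (p + (l + r - 1) - 1)} :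
    (orderedJoin G (orderedStar l r)).Adj i j ↔
      (∃ (hi : (i : ℕ) < p) (hj : (j : ℕ) < p), G.Adj ⟨i, hi⟩ ⟨j, hj⟩) ∨
      (i ≠ j ∧ p - 1 ≤ i ∧ p - 1 ≤ j ∧
        ((i : ℕ) = p - 1 + (l - 1) ∨ (j : ℕ) = p - 1 + (l - 1))) := by
  simp only [orderedJoin, SimpleGraph.fromRel_adj, orderedStar_adj]
  constructor
  · rintro ⟨hne, (⟨a, b, hab, hi, hj⟩ | ⟨a, b, ⟨-, hab⟩, hi, hj⟩) |
      (⟨a, b, hab, hi, hj⟩ | ⟨a, b, ⟨-, hab⟩, hi, hj⟩)⟩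
    · exact .inl ⟨by omega, by omega, by convert hab⟩
    · exact .inr ⟨hne, by omega⟩
    · exact .inl ⟨by omega, by omega, by convert hab.symm⟩
    · exact .inr ⟨hne, by omega⟩
  · rintro (⟨hi, hj, hij⟩ | ⟨hne, hi, hj, hz⟩)
    · exact ⟨G.ne_of_adj hij |>.imp (by rintro rfl; rfl), .inl (.inl ⟨_, _, hij, rfl, rfl⟩)⟩
    · refine ⟨hne, .inl (.inr ⟨⟨i - (p - 1), by omega⟩, ⟨j - (p - 1), by omega⟩,
        ⟨?_, by simp; omega⟩, by simp; omega, by simp; omega⟩)⟩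
      simp [Fin.ext_iff]; omega

namespace IsMonotoneCaterpillar

variable {m : ℕ} {G : SimpleGraph (Fin m)}

theorem not_orderedSubgraph_graphA (h : IsMonotoneCaterpillar G) :
    ¬ OrderedSubgraph graphA G := by
  rw [orderedSubgraph_graphA_iff]
  induction h with
  | star =>
    rintro ⟨a, b, c, d, hab, hbc, hcd, had, hbc'⟩
    rw [orderedStar_adj] at had hbc'
    omega
  | join _ _ _ _ ih =>
    rintro ⟨a, b, c, d, hab, hbc, hcd, had, hbc'⟩
    rw [orderedJoin_orderedStar_adj] at had hbc'
    rcases had with ⟨ha, hd, had⟩ | had <;> rcases hbc' with ⟨hb, hc, hbc'⟩ | hbc'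
    · exact ih ⟨_, _, _, _, hab, hbc, hcd, had, hbc'⟩
    all_goals omega

theorem not_orderedSubgraph_graphB (h : IsMonotoneCaterpillar G) :
    ¬ OrderedSubgraph graphB G := by
  rw [orderedSubgraph_graphB_iff]
  induction h with
  | star =>
    rintro ⟨a, b, c, d, hab, hbc, hcd, hac, hbd⟩
    rw [orderedStar_adj] at hac hbd
    omega
  | join _ _ _ _ ih =>
    rintro ⟨a, b, c, d, hab, hbc, hcd, hac, hbd⟩
    rw [orderedJoin_orderedStar_adj] at hac hbd
    rcases hac with ⟨ha, hc, hac⟩ | hac <;> rcases hbd with ⟨hb, hd, hbd⟩ | hbd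
    · exact ih ⟨_, _, _, _, hab, hbc, hcd, hac, hbd⟩
    all_goals omega

theorem not_orderedSubgraph_graphC (h : IsMonotoneCaterpillar G) :
    ¬ OrderedSubgraph graphC G := by
  rw [orderedSubgraph_graphC_iff]
  induction h with
  | star =>
    rintro ⟨a, b, c, d, hab, hbc, hcd, hab', had, hcd'⟩
    rw [orderedStar_adj] at hab' had hcd'
    omega
  | join _ _ _ _ ih =>
    rintro ⟨a, b, c, d, hab, hbc, hcd, hab', had, hcd'⟩
    rw [orderedJoin_orderedStar_adj] at hab' had hcd'
    rcases hab' with ⟨ha, hb, hab'⟩ | hab' <;> rcases had with ⟨_, hd, had⟩ | had <;>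
      rcases hcd' with ⟨hc, _, hcd'⟩ | hcd'
    · exact ih ⟨_, _, _, _, hab, hbc, hcd, hab', had, hcd'⟩
    all_goals omega

theorem not_orderedSubgraph_triangle (h : IsMonotoneCaterpillar G) :
    ¬ OrderedSubgraph (⊤ : SimpleGraph (Fin 3)) G := by
  rw [orderedSubgraph_triangle_iff]
  induction h with
  | star =>
    rintro ⟨a, b, c, hab, hbc, hab', hac, hbc'⟩
    rw [orderedStar_adj] at hab' hac hbc'
    omega
  | join _ _ _ _ ih =>
    rintro ⟨a, b, c, hab, hbc, hab', hac, hbc'⟩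
    rw [orderedJoin_orderedStar_adj] at hab' hac hbc'
    rcases hab' with ⟨ha, hb, hab'⟩ | hab' <;> rcases hac with ⟨_, hc, hac⟩ | hac <;>
      rcases hbc' with ⟨_, _, hbc'⟩ | hbc'
    · exact ih ⟨_, _, _, hab, hbc, hab', hac, hbc'⟩
    all_goals omega

theorem of_cast {a b : ℕ} (h : a = b) {Ga : SimpleGraph (Fin a)} {Gb : SimpleGraph (Fin b)}
    (hGa : IsMonotoneCaterpillar Ga)
    (hadj : ∀ i j, i < j → (Ga.Adj i j ↔ Gb.Adj (Fin.cast h i) (Fin.cast h j))) :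
    IsMonotoneCaterpillar Gb := by
  subst h
  convert hGa using 1
  ext i j
  rcases lt_trichotomy i j with hij | rfl | hij
  · simpa using (hadj i j hij).symm
  · simp
  · simpa [SimpleGraph.adj_comm] using (hadj j i hij).symm

theorem of_lastBlock {c z : Fin m} (hz : z = c ∨ ∀ x, x ≤ z)
    (hprefix : IsMonotoneCaterpillar (G.comap (Fin.castLE c.isLt)))
    (hlast : ∀ x y, x < y → c < y → (G.Adj x y ↔ c ≤ x ∧ (x = z ∨ y = z))) :
    IsMonotoneCaterpillar G := by
  have hcz : c ≤ z := hz.elim (·.ge) (· c)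
  have hlr : (z : ℕ) - c + 1 = 1 ∨ m - z = 1 := by
    refine hz.imp (fun h => by simp [h]) fun h => ?_
    have : m - 1 ≤ z := h ⟨m - 1, by omega⟩
    omega
  -- the last block is the star on `[c, m)` centred at `z`
  refine (join (l := z - c + 1) (r := m - z) (by omega) (by omega) hlr hprefix).of_cast
    (by omega) fun i j hij => ?_
  rw [orderedJoin_orderedStar_adj]
  by_cases hcj : (c : ℕ) < j
  · rw [hlast _ _ hij hcj]
    have : ¬ (j : ℕ) < c + 1 := by omega
    simp only [this, IsEmpty.exists_iff, exists_false, false_or, Fin.le_def, Fin.ext_iff,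
      Fin.val_cast]
    omega
  · have hj : (j : ℕ) < c + 1 := by omega
    have hi : (i : ℕ) < c + 1 := by omega
    simp only [hi, hj, exists_true_left, SimpleGraph.comap_adj]
    rw [or_iff_left (by omega)]
    rfl

end IsMonotoneCaterpillar

theorem OrderedSubgraph.of_comap {k m N : ℕ} {H : SimpleGraph (Fin k)} {G : SimpleGraph (Fin N)}
    {f : Fin m → Fin N} (hf : StrictMono f) (h : OrderedSubgraph H (G.comap f)) :
    OrderedSubgraph H G :=
  let ⟨φ, hφ, hadj⟩ := h
  ⟨f ∘ φ, hf.comp hφ, hadj⟩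

theorem connected_comap_castLE {m : ℕ} {G : SimpleGraph (Fin m)} (hG : G.Connected) (c : Fin m)
    (hcut : ∀ x y, x < y → c < y → G.Adj x y → c ≤ x) :
    (G.comap (Fin.castLE c.isLt)).Connected := by
  set G' := G.comap (Fin.castLE c.isLt)
  let proj : Fin m → Fin (c + 1) := fun x => ⟨min x c, by omega⟩
  have hproj_lt : ∀ x y, x < y → G.Adj x y → G'.Reachable (proj x) (proj y) := by
    intro x y hxy h
    by_cases hcy : c < y
    · have hcx := hcut x y hxy hcy h
      have : proj x = proj y := by ext; simp only [proj]; omega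
      rw [this]
    · have hx : Fin.castLE c.isLt (proj x) = x := by ext; simp only [proj, Fin.val_castLE]; omega
      have hy : Fin.castLE c.isLt (proj y) = y := by ext; simp only [proj, Fin.val_castLE]; omega
      exact SimpleGraph.Adj.reachable (by simpa [G', hx, hy] using h)
  have hproj : ∀ x y, G.Adj x y → Relation.ReflTransGen G'.Adj (proj x) (proj y) := by
    intro x y h
    rw [← SimpleGraph.reachable_iff_reflTransGen]
    rcases lt_or_gt_of_ne h.ne with hxy | hyx
    · exact hproj_lt x y hxy h
    · exact (hproj_lt y x hyx h.symm).symm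
  have hsection : ∀ a, proj (Fin.castLE c.isLt a) = a := fun a => by
    ext; simp only [proj, Fin.val_castLE]; omega
  have : Nonempty (Fin (c + 1)) := ⟨0⟩
  refine ⟨fun a b => ?_⟩
  have := Relation.ReflTransGen.lift' proj hproj _ _ <|
    (SimpleGraph.reachable_iff_reflTransGen _ _).1 (hG (Fin.castLE c.isLt a) (Fin.castLE c.isLt b))
  rwa [SimpleGraph.reachable_iff_reflTransGen, ← hsection a, ← hsection b]

section LastBlock

-- `v` is the last vertex and `c` its leftmost neighbour.
variable {m : ℕ} {G : SimpleGraph (Fin m)} {c v : Fin m}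

theorem eq_leftmost_or_eq_last_of_adj (hA : ¬ OrderedSubgraph graphA G)
    (hB : ¬ OrderedSubgraph graphB G) (hv : ∀ x, x ≤ v) (hcv : G.Adj c v) (hmin : ∀ x, G.Adj x v → c ≤ x)
    ⦃x y : Fin m⦄ (hxy : x < y) (hcy : c < y) (h : G.Adj x y) : c ≤ x ∧ (x = c ∨ y = v) := by
  rw [orderedSubgraph_graphA_iff] at hA
  rw [orderedSubgraph_graphB_iff] at hB
  rcases (hv y).lt_or_eq with hyv | rfl
  · rcases lt_trichotomy x c with hxc | rfl | hcx
    · exact (hB ⟨x, c, y, v, hxc, hcy, hyv, h, hcv⟩).elim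
    · exact ⟨le_rfl, .inl rfl⟩
    · exact (hA ⟨c, x, y, v, hcx, hxy, hyv, hcv, h⟩).elim
  · exact ⟨hmin x h, .inr rfl⟩

theorem adj_iff_of_adj_last (hA : ¬ OrderedSubgraph graphA G) (hB : ¬ OrderedSubgraph graphB G)
    (hC : ¬ OrderedSubgraph graphC G) (hD : ¬ OrderedSubgraph (⊤ : SimpleGraph (Fin 3)) G)
    (hnbr : ∀ x, ∃ u, G.Adj x u) (hv : ∀ x, x ≤ v) (hcv : G.Adj c v)
    (hmin : ∀ x, G.Adj x v → c ≤ x) {w : Fin m} (hcw : c < w) (hwv : w < v) (hw : G.Adj w v)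
    {x y : Fin m} (hxy : x < y) (hcy : c < y) : G.Adj x y ↔ c ≤ x ∧ y = v := by
  have hcases := eq_leftmost_or_eq_last_of_adj hA hB hv hcv hmin
  rw [orderedSubgraph_graphB_iff] at hB
  rw [orderedSubgraph_graphC_iff] at hC
  rw [orderedSubgraph_triangle_iff] at hD
  have hmid : ∀ y, c < y → y < v → G.Adj y v := by
    intro y hcy hyv
    obtain ⟨u, hu⟩ := hnbr y
    rcases lt_trichotomy u y with huy | rfl | hyu
    · obtain ⟨-, rfl | rfl⟩ := hcases huy hcy hu.symm
      · rcases lt_trichotomy y w with hyw | rfl | hwy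
        · exact (hC ⟨u, y, w, v, hcy, hyw, hwv, hu.symm, hcv, hw⟩).elim
        · exact (hD ⟨u, y, v, hcy, hyv, hu.symm, hcv, hw⟩).elim
        · exact (hB ⟨u, w, y, v, hcw, hwy, hyv, hu.symm, hw⟩).elim
      · exact (hyv.ne rfl).elim
    · exact (G.irrefl hu).elim
    · obtain ⟨-, rfl | rfl⟩ := hcases hyu (hcy.trans hyu) hu
      · exact (hcy.ne rfl).elim
      · exact hu
  constructor
  · intro h
    obtain ⟨hcx, rfl | rfl⟩ := hcases hxy hcy h
    · refine ⟨le_rfl, (hv y).eq_or_lt.resolve_right fun hyv => ?_⟩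
      exact hD ⟨x, y, v, hcy, hyv, h, hcv, hmid y hcy hyv⟩
    · exact ⟨hcx, rfl⟩
  · rintro ⟨hcx, rfl⟩
    rcases hcx.eq_or_lt with rfl | hcx
    · exact hcv
    · exact hmid x hcx hxy

theorem adj_iff_of_not_adj_last (hA : ¬ OrderedSubgraph graphA G)
    (hB : ¬ OrderedSubgraph graphB G) (hnbr : ∀ x, ∃ u, G.Adj x u) (hv : ∀ x, x ≤ v)
    (hcv : G.Adj c v) (hmin : ∀ x, G.Adj x v → c ≤ x) (hno : ∀ w, c < w → w < v → ¬ G.Adj w v)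
    {x y : Fin m} (hxy : x < y) (hcy : c < y) : G.Adj x y ↔ x = c := by
  have hcases := eq_leftmost_or_eq_last_of_adj hA hB hv hcv hmin
  constructor
  · intro h
    obtain ⟨hcx, rfl | rfl⟩ := hcases hxy hcy h
    · rfl
    · exact hcx.eq_or_lt.elim Eq.symm fun hcx => (hno x hcx hxy h).elim
  · rintro rfl
    rcases (hv y).lt_or_eq with hyv | rfl
    · obtain ⟨u, hu⟩ := hnbr y
      rcases lt_trichotomy u y with huy | rfl | hyu
      · obtain ⟨-, rfl | rfl⟩ := hcases huy hcy hu.symm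
        · exact hu.symm
        · exact (hyv.ne rfl).elim
      · exact (G.irrefl hu).elim
      · obtain ⟨-, rfl | rfl⟩ := hcases hyu (hcy.trans hyu) hu
        · exact (hcy.ne rfl).elim
        · exact (hno y hcy hyv hu).elim
    · exact hcv

theorem exists_lastBlock (hA : ¬ OrderedSubgraph graphA G) (hB : ¬ OrderedSubgraph graphB G)
    (hC : ¬ OrderedSubgraph graphC G) (hD : ¬ OrderedSubgraph (⊤ : SimpleGraph (Fin 3)) G)
    (hnbr : ∀ x, ∃ u, G.Adj x u) (hv : ∀ x, x ≤ v) (hcv : G.Adj c v)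
    (hmin : ∀ x, G.Adj x v → c ≤ x) :
    ∃ z, (z = c ∨ z = v) ∧ ∀ x y, x < y → c < y → (G.Adj x y ↔ c ≤ x ∧ (x = z ∨ y = z)) := by
  by_cases hw : ∃ w, c < w ∧ w < v ∧ G.Adj w v
  · obtain ⟨w, hcw, hwv, hw⟩ := hw
    refine ⟨v, .inr rfl, fun x y hxy hcy => ?_⟩
    rw [adj_iff_of_adj_last hA hB hC hD hnbr hv hcv hmin hcw hwv hw hxy hcy]
    have := hv y
    constructor
    · rintro ⟨hcx, rfl⟩; exact ⟨hcx, .inr rfl⟩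
    · rintro ⟨hcx, rfl | rfl⟩
      · exact absurd (hxy.trans_le this) (lt_irrefl _)
      · exact ⟨hcx, rfl⟩
  · simp only [not_exists, not_and] at hw
    refine ⟨c, .inl rfl, fun x y hxy hcy => ?_⟩
    rw [adj_iff_of_not_adj_last hA hB hnbr hv hcv hmin hw hxy hcy]
    constructor
    · rintro rfl; exact ⟨le_rfl, .inl rfl⟩
    · rintro ⟨-, h | rfl⟩
      · exact h
      · exact (lt_irrefl _ hcy).elim

end LastBlock

theorem IsMonotoneCaterpillar.of_not_orderedSubgraph {m : ℕ} {G : SimpleGraph (Fin m)}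
    (hG : G.Connected) (hA : ¬ OrderedSubgraph graphA G) (hB : ¬ OrderedSubgraph graphB G)
    (hC : ¬ OrderedSubgraph graphC G) (hD : ¬ OrderedSubgraph (⊤ : SimpleGraph (Fin 3)) G) :
    IsMonotoneCaterpillar G := by
  induction m using Nat.strong_induction_on with
  | _ m ih =>
  obtain ⟨n, rfl⟩ : ∃ n, m = n + 1 :=
    Nat.exists_eq_succ_of_ne_zero (Fin.pos_iff_nonempty.2 hG.nonempty).ne'
  rcases n.eq_zero_or_pos with rfl | hn
  · exact (star le_rfl le_rfl (.inl rfl)).of_cast rfl fun i j hij => absurd hij (by omega)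
  have : Nontrivial (Fin (n + 1)) := Fin.nontrivial_iff_two_le.2 (by omega)
  have hnbr := hG.preconnected.exists_adj_of_nontrivial
  obtain ⟨c, hcv, hmin⟩ := wellFounded_lt.has_min {x | G.Adj x (Fin.last n)}
    (let ⟨u, hu⟩ := hnbr (Fin.last n); ⟨u, hu.symm⟩)
  have hcn : (c : ℕ) < n := (Fin.le_last c).lt_of_ne (G.ne_of_adj hcv)
  obtain ⟨z, hz, hlast⟩ := exists_lastBlock hA hB hC hD hnbr Fin.le_last hcv
    fun x hx => not_lt.1 (hmin x hx)
  have hcut : ∀ x y, x < y → c < y → G.Adj x y → c ≤ x :=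
    fun x y hxy hcy h => ((hlast x y hxy hcy).1 h).1
  have hmono := Fin.strictMono_castLE c.isLt
  refine .of_lastBlock (hz.imp_right fun h => h ▸ Fin.le_last) ?_ hlast
  exact ih (c + 1) (by omega) (connected_comap_castLE hG c hcut) (hA ∘ .of_comap hmono)
    (hB ∘ .of_comap hmono) (hC ∘ .of_comap hmono) (hD ∘ .of_comap hmono)

/-- A connected ordered graph is a monotone caterpillar graph iff it
contains none of `A`, `B`, `C`, `D = K_3` as an ordered subgraph. -/
theorem stmt_12 (m : ℕ) (G : SimpleGraph (Fin m)) (hG : G.Connected) :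
    IsMonotoneCaterpillar G ↔
      (¬ OrderedSubgraph graphA G ∧ ¬ OrderedSubgraph graphB G ∧
       ¬ OrderedSubgraph graphC G ∧ ¬ OrderedSubgraph (⊤ : SimpleGraph (Fin 3)) G) :=
  ⟨fun h => ⟨h.not_orderedSubgraph_graphA, h.not_orderedSubgraph_graphB,
      h.not_orderedSubgraph_graphC, h.not_orderedSubgraph_triangle⟩,
    fun ⟨hA, hB, hC, hD⟩ => .of_not_orderedSubgraph hG hA hB hC hD⟩
end
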